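/- arXiv:2110.10400 — 2 statements merged into one kernel-verified Lean document; each statement's English description precedes it below -/
import Mathlib

section
/- If a positive definite density matrix ρ on H_A ⊗ H_B ⊗ H_C has all real entries in some product basis over A, B, and C, then its modular commutator vanishes: J(A,B,C)_ρ = 0. -/
open scoped ComplexOrder

noncomputable section

namespace ModularCommutator

open Matrix Complex

/-- Matrix logarithm of a Hermitian matrix, defined through the spectral theorem
(junk value `0` on non-Hermitian matrices). -/
noncomputable def mlog {n : Type} [Fintype n] [DecidableEq n] (M : Matrix n n ℂ) :
    Matrix n n ℂ :=
  if h : M.IsHermitian then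
    (h.eigenvectorUnitary : Matrix n n ℂ) *
      Matrix.diagonal (fun i => (Real.log (h.eigenvalues i) : ℂ)) *
      (star (h.eigenvectorUnitary : Matrix n n ℂ))
  else 0

variable {A B C : Type} [Fintype A] [DecidableEq A] [Fintype B] [DecidableEq B]
  [Fintype C] [DecidableEq C]

/-- Partial trace onto the factors `A ⊗ B`. -/
def ptAB (ρ : Matrix (A × B × C) (A × B × C) ℂ) : Matrix (A × B) (A × B) ℂ :=
  fun p q => ∑ c : C, ρ (p.1, p.2, c) (q.1, q.2, c)

/-- Partial trace onto the factors `B ⊗ C`. -/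
def ptBC (ρ : Matrix (A × B × C) (A × B × C) ℂ) : Matrix (B × C) (B × C) ℂ :=
  fun p q => ∑ a : A, ρ (a, p.1, p.2) (a, q.1, q.2)

/-- Partial trace onto the factors `A ⊗ C`. -/
def ptAC (ρ : Matrix (A × B × C) (A × B × C) ℂ) : Matrix (A × C) (A × C) ℂ :=
  fun p q => ∑ b : B, ρ (p.1, b, p.2) (q.1, b, q.2)

/-- Partial trace onto the factor `A`. -/
def ptA (ρ : Matrix (A × B × C) (A × B × C) ℂ) : Matrix A A ℂ :=
  fun a a' => ∑ b : B, ∑ c : C, ρ (a, b, c) (a', b, c)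

/-- Partial trace onto the factor `B`. -/
def ptB (ρ : Matrix (A × B × C) (A × B × C) ℂ) : Matrix B B ℂ :=
  fun b b' => ∑ a : A, ∑ c : C, ρ (a, b, c) (a, b', c)

/-- Partial trace onto the factor `C`. -/
def ptC (ρ : Matrix (A × B × C) (A × B × C) ℂ) : Matrix C C ℂ :=
  fun c c' => ∑ a : A, ∑ b : B, ρ (a, b, c) (a, b, c')

/-- Extension of an operator on `A ⊗ B` by the identity on `C`. -/
def embAB (M : Matrix (A × B) (A × B) ℂ) : Matrix (A × B × C) (A × B × C) ℂ :=
  fun x y => if x.2.2 = y.2.2 then M (x.1, x.2.1) (y.1, y.2.1) else 0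

/-- Extension of an operator on `B ⊗ C` by the identity on `A`. -/
def embBC (M : Matrix (B × C) (B × C) ℂ) : Matrix (A × B × C) (A × B × C) ℂ :=
  fun x y => if x.1 = y.1 then M x.2 y.2 else 0

/-- Extension of an operator on `B` by the identity on `A ⊗ C`. -/
def embB (M : Matrix B B ℂ) : Matrix (A × B × C) (A × B × C) ℂ :=
  fun x y => if x.1 = y.1 ∧ x.2.2 = y.2.2 then M x.2.1 y.2.1 else 0

/-- The modular Hamiltonian `K_{AB}(ρ) = −ln ρ_{AB}`, extended by the identity on `C`. -/
def KAB (ρ : Matrix (A × B × C) (A × B × C) ℂ) : Matrix (A × B × C) (A × B × C) ℂ :=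
  embAB (-(mlog (ptAB ρ)))

/-- The modular Hamiltonian `K_{BC}(ρ) = −ln ρ_{BC}`, extended by the identity on `A`. -/
def KBC (ρ : Matrix (A × B × C) (A × B × C) ℂ) : Matrix (A × B × C) (A × B × C) ℂ :=
  embBC (-(mlog (ptBC ρ)))

/-- The modular commutator `J(A,B,C)_ρ = i · Tr(ρ [K_{AB}(ρ), K_{BC}(ρ)])`. -/
def Jmod (ρ : Matrix (A × B × C) (A × B × C) ℂ) : ℂ :=
  Complex.I * (ρ * (KAB ρ * KBC ρ - KBC ρ * KAB ρ)).trace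

/-- The tensor product `U_A ⊗ U_B ⊗ U_C` of three one-site operators. -/
def tens3 (UA : Matrix A A ℂ) (UB : Matrix B B ℂ) (UC : Matrix C C ℂ) :
    Matrix (A × B × C) (A × B × C) ℂ :=
  fun x y => UA x.1 y.1 * UB x.2.1 y.2.1 * UC x.2.2 y.2.2

/-!
Conjugating `ρ` by a product unitary `V = U_A ⊗ U_B ⊗ U_C` conjugates `ρ_AB` and `ρ_BC` by
`U_A ⊗ U_B` and `U_B ⊗ U_C` (the unitary on the traced factor cancels), and the logarithm, being
a continuous functional calculus, commutes with this; so `K_AB` and `K_BC` are conjugated by `V`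
and `J` is unchanged. We may therefore assume that `ρ` has real entries. Entrywise complex
conjugation is a real ⋆-algebra automorphism commuting with partial traces and with the
logarithm, so `K_AB` and `K_BC` are real too, and `Tr (ρ [K_AB, K_BC])` is real. It is also purely
imaginary, being the trace of `ρ` against the commutator of two Hermitian matrices; so it is `0`.
-/

open scoped Kronecker

section PartialTrace

variable {R X Y : Type*} [Fintype Y]

def traceRight [AddCommMonoid R] (ρ : Matrix (X × Y) (X × Y) R) : Matrix X X R :=
  fun i j => ∑ k, ρ (i, k) (j, k)

theorem traceRight_map [AddCommMonoid R] {S F : Type*} [AddCommMonoid S] [FunLike F R S]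
    [AddMonoidHomClass F R S] (f : F) (ρ : Matrix (X × Y) (X × Y) R) :
    traceRight (ρ.map f) = (traceRight ρ).map f := by
  ext i j
  simp [traceRight, map_sum]

theorem traceRight_isHermitian [AddCommMonoid R] [StarAddMonoid R]
    {ρ : Matrix (X × Y) (X × Y) R} (hρ : ρ.IsHermitian) : (traceRight ρ).IsHermitian := by
  ext i j
  simp [traceRight, conjTranspose_apply, star_sum, hρ.apply]

variable [Fintype X]

theorem traceRight_kronecker_one_mul [Semiring R] [DecidableEq Y] (M : Matrix X X R)
    (ρ : Matrix (X × Y) (X × Y) R) :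
    traceRight ((M ⊗ₖ (1 : Matrix Y Y R)) * ρ) = M * traceRight ρ := by
  ext i j
  simp [traceRight, mul_apply, Fintype.sum_prod_type, one_apply, Finset.mul_sum]
  exact Finset.sum_comm

theorem traceRight_mul_kronecker_one [Semiring R] [DecidableEq Y]
    (ρ : Matrix (X × Y) (X × Y) R) (M : Matrix X X R) :
    traceRight (ρ * (M ⊗ₖ (1 : Matrix Y Y R))) = traceRight ρ * M := by
  ext i j
  simp [traceRight, mul_apply, Fintype.sum_prod_type, one_apply, Finset.sum_mul]
  exact Finset.sum_comm

theorem traceRight_mul_one_kronecker_comm [CommSemiring R] [DecidableEq X]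
    (ρ : Matrix (X × Y) (X × Y) R) (U : Matrix Y Y R) :
    traceRight (ρ * ((1 : Matrix X X R) ⊗ₖ U)) = traceRight ((1 ⊗ₖ U) * ρ) := by
  ext i j
  simp [traceRight, mul_apply, Fintype.sum_prod_type, one_apply]
  rw [Finset.sum_comm]
  exact Finset.sum_congr rfl fun _ _ => Finset.sum_congr rfl fun _ _ => mul_comm _ _

theorem traceRight_kronecker_conj [CommSemiring R] [StarRing R] [DecidableEq X]
    [DecidableEq Y] (W : Matrix X X R) {U : Matrix Y Y R} (hU : U ∈ unitary (Matrix Y Y R))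
    (ρ : Matrix (X × Y) (X × Y) R) :
    traceRight ((W ⊗ₖ U) * ρ * star (W ⊗ₖ U)) = W * traceRight ρ * star W := by
  have hsplit : W ⊗ₖ U = (W ⊗ₖ 1) * (1 ⊗ₖ U) := by
    rw [← mul_kronecker_mul, mul_one, one_mul]
  have hstar : star (W ⊗ₖ U) = (1 ⊗ₖ star U) * (star W ⊗ₖ 1) := by
    rw [star_eq_conjTranspose, conjTranspose_kronecker, ← mul_kronecker_mul, mul_one, one_mul]
    rfl
  have hassoc : (W ⊗ₖ 1) * (1 ⊗ₖ U) * ρ * ((1 ⊗ₖ star U) * (star W ⊗ₖ 1))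
      = (W ⊗ₖ 1) * ((1 ⊗ₖ U) * ρ * (1 ⊗ₖ star U)) *
          (star W ⊗ₖ (1 : Matrix Y Y R)) := by
    simp only [mul_assoc]
  -- `1 ⊗ₖ U` can be moved around the partial trace over `Y`, where it meets `1 ⊗ₖ star U`.
  rw [hstar, hsplit, hassoc, traceRight_mul_kronecker_one, traceRight_kronecker_one_mul,
    traceRight_mul_one_kronecker_comm, ← mul_assoc, ← mul_kronecker_mul, one_mul,
    Unitary.star_mul_self_of_mem hU, one_kronecker_one, one_mul]

end PartialTrace

section MatrixLog

variable {n m : Type} [Fintype n] [DecidableEq n] [Fintype m] [DecidableEq m]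

theorem mlog_eq_cfc {M : Matrix n n ℂ} (hM : M.IsHermitian) : mlog M = cfc Real.log M := by
  rw [mlog, dif_pos hM, hM.cfc_eq, IsHermitian.cfc]
  rfl

theorem mlog_isHermitian {M : Matrix n n ℂ} (hM : M.IsHermitian) : (mlog M).IsHermitian := by
  rw [mlog_eq_cfc hM]
  exact cfc_predicate Real.log M

theorem map_mlog {F : Type*} [FunLike F (Matrix n n ℂ) (Matrix m m ℂ)]
    [AlgHomClass F ℝ (Matrix n n ℂ) (Matrix m m ℂ)]
    [StarHomClass F (Matrix n n ℂ) (Matrix m m ℂ)]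
    (φ : F) {M : Matrix n n ℂ} (hM : M.IsHermitian) : φ (mlog M) = mlog (φ M) := by
  have hφM : (φ M).IsHermitian := hM.isSelfAdjoint.map φ
  rw [mlog_eq_cfc hM, mlog_eq_cfc hφM]
  exact StarAlgHomClass.map_cfc φ Real.log M
    (hf := (hM.spectrum_real_eq_range_eigenvalues ▸ Set.finite_range _).continuousOn _)
    (hφ := LinearMap.continuous_of_finiteDimensional
      (φ : Matrix n n ℂ →ₐ[ℝ] Matrix m m ℂ).toLinearMap)

end MatrixLog

section EntrywiseConj

variable {n : Type*} [Fintype n] [DecidableEq n]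

def entrywiseConj : Matrix n n ℂ →⋆ₐ[ℝ] Matrix n n ℂ :=
  { (Complex.conjAe.toAlgHom.mapMatrix : Matrix n n ℂ →ₐ[ℝ] Matrix n n ℂ) with
    map_star' := fun M => by ext; simp }

theorem entrywiseConj_apply (M : Matrix n n ℂ) : entrywiseConj M = M.map (starRingEnd ℂ) := rfl

theorem trace_entrywiseConj (M : Matrix n n ℂ) :
    (entrywiseConj M).trace = starRingEnd ℂ M.trace := by
  simp [entrywiseConj_apply, trace, map_sum]

end EntrywiseConj

section Commutator

variable {R n : Type*} [Fintype n]

theorem star_trace_mul_commutator [CommRing R] [StarRing R] {ρ K L : Matrix n n R}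
    (hρ : ρ.IsHermitian) (hK : K.IsHermitian) (hL : L.IsHermitian) :
    star (ρ * (K * L - L * K)).trace = -(ρ * (K * L - L * K)).trace := by
  rw [← trace_conjTranspose, conjTranspose_mul, conjTranspose_sub, conjTranspose_mul,
    conjTranspose_mul, hρ.eq, hK.eq, hL.eq, trace_mul_comm, ← neg_sub, mul_neg, trace_neg]

theorem trace_mul_commutator_unitary_conj [CommRing R] [StarRing R] [DecidableEq n]
    {V : Matrix n n R} (hV : V ∈ unitary (Matrix n n R)) (ρ K L : Matrix n n R) :
    (V * ρ * star V *
        (V * K * star V * (V * L * star V) - V * L * star V * (V * K * star V))).trace =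
      (ρ * (K * L - L * K)).trace := by
  let φ := Unitary.conjStarAlgAut R (Matrix n n R) ⟨V, hV⟩
  have hφ : ∀ X, φ X = V * X * star V := fun _ => rfl
  simp only [← hφ, ← map_mul, ← map_sub]
  rw [hφ, trace_mul_cycle, Unitary.star_mul_self_of_mem hV, one_mul]

theorem trace_mul_commutator_eq_zero_of_real [DecidableEq n] {ρ K L : Matrix n n ℂ}
    (hρ : ρ.IsHermitian) (hK : K.IsHermitian) (hL : L.IsHermitian)
    (hρ_real : entrywiseConj ρ = ρ) (hK_real : entrywiseConj K = K)
    (hL_real : entrywiseConj L = L) :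
    (ρ * (K * L - L * K)).trace = 0 := by
  have h_real : starRingEnd ℂ (ρ * (K * L - L * K)).trace = (ρ * (K * L - L * K)).trace := by
    rw [← trace_entrywiseConj, map_mul, map_sub, map_mul, map_mul, hρ_real, hK_real, hL_real]
  exact self_eq_neg.mp (h_real.symm.trans (star_trace_mul_commutator hρ hK hL))

end Commutator

theorem submatrix_equiv_mem_unitary {R m n : Type*} [CommRing R] [StarRing R]
    [Fintype m] [DecidableEq m] [Fintype n] [DecidableEq n] (e : m ≃ n)
    {U : Matrix n n R} (hU : U ∈ unitary (Matrix n n R)) :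
    U.submatrix e e ∈ unitary (Matrix m m R) := by
  rw [Unitary.mem_iff, star_eq_conjTranspose, conjTranspose_submatrix, ← star_eq_conjTranspose,
    submatrix_mul_equiv, submatrix_mul_equiv, Unitary.star_mul_self_of_mem hU,
    Unitary.mul_star_self_of_mem hU, submatrix_one_equiv]
  exact ⟨rfl, rfl⟩

section ModularHamiltonian

variable {X Y N : Type} [Fintype X] [DecidableEq X] [Fintype Y] [DecidableEq Y]

def modularHamiltonian (ρ : Matrix (X × Y) (X × Y) ℂ) : Matrix (X × Y) (X × Y) ℂ :=
  (-mlog (traceRight ρ)) ⊗ₖ (1 : Matrix Y Y ℂ)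

theorem modularHamiltonian_isHermitian {ρ : Matrix (X × Y) (X × Y) ℂ} (hρ : ρ.IsHermitian) :
    (modularHamiltonian ρ).IsHermitian := by
  rw [modularHamiltonian, IsHermitian, conjTranspose_kronecker, conjTranspose_one,
    (mlog_isHermitian (traceRight_isHermitian hρ)).neg.eq]

theorem modularHamiltonian_kronecker_conj {W : Matrix X X ℂ} {U : Matrix Y Y ℂ}
    (hW : W ∈ unitary (Matrix X X ℂ)) (hU : U ∈ unitary (Matrix Y Y ℂ))
    {ρ : Matrix (X × Y) (X × Y) ℂ} (hρ : ρ.IsHermitian) :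
    modularHamiltonian ((W ⊗ₖ U) * ρ * star (W ⊗ₖ U)) =
      (W ⊗ₖ U) * modularHamiltonian ρ * star (W ⊗ₖ U) := by
  have hlog := map_mlog (Unitary.conjStarAlgAut ℝ (Matrix X X ℂ) ⟨W, hW⟩)
    (traceRight_isHermitian hρ)
  simp only [Unitary.conjStarAlgAut_apply] at hlog
  have hstar : star (W ⊗ₖ U) = star W ⊗ₖ star U := conjTranspose_kronecker W U
  rw [modularHamiltonian, modularHamiltonian, traceRight_kronecker_conj W hU, ← hlog, hstar,
    ← mul_kronecker_mul, ← mul_kronecker_mul, mul_one, Unitary.mul_star_self_of_mem hU, mul_neg,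
    neg_mul]

theorem modularHamiltonian_entrywiseConj {ρ : Matrix (X × Y) (X × Y) ℂ}
    (hρ : ρ.IsHermitian) :
    modularHamiltonian (entrywiseConj ρ) = entrywiseConj (modularHamiltonian ρ) := by
  have hlog := map_mlog (entrywiseConj (n := X)) (traceRight_isHermitian hρ)
  rw [entrywiseConj_apply, modularHamiltonian, traceRight_map, ← entrywiseConj_apply, ← hlog]
  ext ⟨i, k⟩ ⟨j, l⟩
  by_cases hkl : k = l <;> simp [modularHamiltonian, entrywiseConj_apply, hkl]

/-- `K_X = -log ρ_X` for the subsystem `X` of `N ≃ X × Y`. -/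
def modularHamiltonianAlong (e : X × Y ≃ N) (ρ : Matrix N N ℂ) : Matrix N N ℂ :=
  (modularHamiltonian (ρ.submatrix e e)).submatrix e.symm e.symm

theorem modularHamiltonianAlong_isHermitian (e : X × Y ≃ N) {ρ : Matrix N N ℂ}
    (hρ : ρ.IsHermitian) :
    (modularHamiltonianAlong e ρ).IsHermitian :=
  (modularHamiltonian_isHermitian (hρ.submatrix e)).submatrix e.symm

theorem modularHamiltonianAlong_kronecker_conj [Fintype N] (e : X × Y ≃ N)
    {W : Matrix X X ℂ} {U : Matrix Y Y ℂ} (hW : W ∈ unitary (Matrix X X ℂ))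
    (hU : U ∈ unitary (Matrix Y Y ℂ)) {ρ : Matrix N N ℂ} (hρ : ρ.IsHermitian) :
    modularHamiltonianAlong e
        ((W ⊗ₖ U).submatrix e.symm e.symm * ρ * star ((W ⊗ₖ U).submatrix e.symm e.symm)) =
      (W ⊗ₖ U).submatrix e.symm e.symm * modularHamiltonianAlong e ρ *
        star ((W ⊗ₖ U).submatrix e.symm e.symm) := by
  have h := modularHamiltonian_kronecker_conj hW hU (hρ.submatrix e)
  simp only [modularHamiltonianAlong, star_eq_conjTranspose, conjTranspose_submatrix] at h ⊢
  rw [← submatrix_mul_equiv _ _ _ e, ← submatrix_mul_equiv _ _ _ e]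
  simp only [submatrix_submatrix, Equiv.symm_comp_self, submatrix_id_id, h, submatrix_mul_equiv]

theorem modularHamiltonianAlong_entrywiseConj [Fintype N] [DecidableEq N] (e : X × Y ≃ N)
    {ρ : Matrix N N ℂ} (hρ : ρ.IsHermitian) :
    modularHamiltonianAlong e (entrywiseConj ρ) =
      entrywiseConj (modularHamiltonianAlong e ρ) := by
  show (modularHamiltonian (entrywiseConj (ρ.submatrix e e))).submatrix e.symm e.symm = _
  rw [modularHamiltonian_entrywiseConj (hρ.submatrix e)]
  rfl

end ModularHamiltonian

theorem KAB_eq_modularHamiltonianAlong (ρ : Matrix (A × B × C) (A × B × C) ℂ) :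
    KAB ρ = modularHamiltonianAlong (Equiv.prodAssoc A B C) ρ := by
  have hpt : ptAB ρ =
      traceRight (ρ.submatrix (Equiv.prodAssoc A B C) (Equiv.prodAssoc A B C)) := rfl
  ext ⟨a, b, c⟩ ⟨a', b', c'⟩
  by_cases hc : c = c' <;>
    simp [KAB, embAB, modularHamiltonianAlong, modularHamiltonian, hpt, hc]

theorem KBC_eq_modularHamiltonianAlong (ρ : Matrix (A × B × C) (A × B × C) ℂ) :
    KBC ρ = modularHamiltonianAlong (Equiv.prodComm (B × C) A) ρ := by
  have hpt : ptBC ρ =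
      traceRight (ρ.submatrix (Equiv.prodComm (B × C) A) (Equiv.prodComm (B × C) A)) := rfl
  ext ⟨a, b, c⟩ ⟨a', b', c'⟩
  by_cases ha : a = a' <;>
    simp [KBC, embBC, modularHamiltonianAlong, modularHamiltonian, hpt, ha]

section ProductUnitary

variable {UA : Matrix A A ℂ} {UB : Matrix B B ℂ} {UC : Matrix C C ℂ}

theorem tens3_mem_unitaryGroup (hUA : UA ∈ unitaryGroup A ℂ) (hUB : UB ∈ unitaryGroup B ℂ)
    (hUC : UC ∈ unitaryGroup C ℂ) :
    tens3 UA UB UC ∈ unitaryGroup (A × B × C) ℂ := by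
  rw [show tens3 UA UB UC = ((UA ⊗ₖ UB) ⊗ₖ UC).submatrix (Equiv.prodAssoc A B C).symm
    (Equiv.prodAssoc A B C).symm from rfl]
  exact submatrix_equiv_mem_unitary (Equiv.prodAssoc A B C).symm
    (kronecker_mem_unitary (kronecker_mem_unitary hUA hUB) hUC)

theorem KAB_tens3_conj (hUA : UA ∈ unitaryGroup A ℂ) (hUB : UB ∈ unitaryGroup B ℂ)
    (hUC : UC ∈ unitaryGroup C ℂ) {ρ : Matrix (A × B × C) (A × B × C) ℂ}
    (hρ : ρ.IsHermitian) :
    KAB (tens3 UA UB UC * ρ * star (tens3 UA UB UC))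
      = tens3 UA UB UC * KAB ρ * star (tens3 UA UB UC) := by
  have hV : tens3 UA UB UC = ((UA ⊗ₖ UB) ⊗ₖ UC).submatrix (Equiv.prodAssoc A B C).symm
      (Equiv.prodAssoc A B C).symm := rfl
  rw [KAB_eq_modularHamiltonianAlong, KAB_eq_modularHamiltonianAlong, hV]
  exact modularHamiltonianAlong_kronecker_conj _ (kronecker_mem_unitary hUA hUB) hUC hρ

theorem KBC_tens3_conj (hUA : UA ∈ unitaryGroup A ℂ) (hUB : UB ∈ unitaryGroup B ℂ)
    (hUC : UC ∈ unitaryGroup C ℂ) {ρ : Matrix (A × B × C) (A × B × C) ℂ}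
    (hρ : ρ.IsHermitian) :
    KBC (tens3 UA UB UC * ρ * star (tens3 UA UB UC))
      = tens3 UA UB UC * KBC ρ * star (tens3 UA UB UC) := by
  have hV : tens3 UA UB UC = ((UB ⊗ₖ UC) ⊗ₖ UA).submatrix (Equiv.prodComm (B × C) A).symm
      (Equiv.prodComm (B × C) A).symm := by
    ext ⟨a, b, c⟩ ⟨a', b', c'⟩
    show UA a a' * UB b b' * UC c c' = UB b b' * UC c c' * UA a a'
    ring
  rw [KBC_eq_modularHamiltonianAlong, KBC_eq_modularHamiltonianAlong, hV]
  exact modularHamiltonianAlong_kronecker_conj _ (kronecker_mem_unitary hUB hUC) hUA hρ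

theorem Jmod_tens3_conj (hUA : UA ∈ unitaryGroup A ℂ) (hUB : UB ∈ unitaryGroup B ℂ)
    (hUC : UC ∈ unitaryGroup C ℂ) {ρ : Matrix (A × B × C) (A × B × C) ℂ}
    (hρ : ρ.IsHermitian) :
    Jmod (tens3 UA UB UC * ρ * star (tens3 UA UB UC)) = Jmod ρ := by
  rw [Jmod, Jmod, KAB_tens3_conj hUA hUB hUC hρ, KBC_tens3_conj hUA hUB hUC hρ,
    trace_mul_commutator_unitary_conj (tens3_mem_unitaryGroup hUA hUB hUC)]

end ProductUnitary

theorem Jmod_eq_zero_of_entrywiseConj_eq {σ : Matrix (A × B × C) (A × B × C) ℂ}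
    (hσ : σ.IsHermitian) (hσ_real : entrywiseConj σ = σ) : Jmod σ = 0 := by
  have hKAB : (KAB σ).IsHermitian :=
    KAB_eq_modularHamiltonianAlong σ ▸ modularHamiltonianAlong_isHermitian _ hσ
  have hKBC : (KBC σ).IsHermitian :=
    KBC_eq_modularHamiltonianAlong σ ▸ modularHamiltonianAlong_isHermitian _ hσ
  have hKAB_real : entrywiseConj (KAB σ) = KAB σ := by
    rw [KAB_eq_modularHamiltonianAlong, ← modularHamiltonianAlong_entrywiseConj _ hσ, hσ_real]
  have hKBC_real : entrywiseConj (KBC σ) = KBC σ := by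
    rw [KBC_eq_modularHamiltonianAlong, ← modularHamiltonianAlong_entrywiseConj _ hσ, hσ_real]
  rw [Jmod, trace_mul_commutator_eq_zero_of_real hσ hKAB hKBC hσ_real hKAB_real hKBC_real,
    mul_zero]

theorem modular_commutator_real_entries_general
    (ρ : Matrix (A × B × C) (A × B × C) ℂ) (hρ : ρ.PosDef)
    (hreal : ∃ (UA : Matrix A A ℂ) (UB : Matrix B B ℂ) (UC : Matrix C C ℂ),
      UA ∈ Matrix.unitaryGroup A ℂ ∧ UB ∈ Matrix.unitaryGroup B ℂ ∧
      UC ∈ Matrix.unitaryGroup C ℂ ∧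
      ∀ x y, ((tens3 UA UB UC * ρ * star (tens3 UA UB UC)) x y).im = 0) :
    Jmod ρ = 0 := by
  obtain ⟨UA, UB, UC, hUA, hUB, hUC, him⟩ := hreal
  have hσ : (tens3 UA UB UC * ρ * star (tens3 UA UB UC)).IsHermitian :=
    isHermitian_mul_mul_conjTranspose _ hρ.isHermitian
  have hσ_real : entrywiseConj (tens3 UA UB UC * ρ * star (tens3 UA UB UC))
      = tens3 UA UB UC * ρ * star (tens3 UA UB UC) := by
    ext x y
    exact Complex.conj_eq_iff_im.mpr (him x y)
  rw [← Jmod_tens3_conj hUA hUB hUC hρ.isHermitian]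
  exact Jmod_eq_zero_of_entrywiseConj_eq hσ hσ_real

/-- If a positive definite density matrix `ρ` on `H_A ⊗ H_B ⊗ H_C`
has all real entries in some product basis over `A`, `B`, and `C` (i.e. after
conjugation by some product unitary `U_A ⊗ U_B ⊗ U_C` all matrix entries are real),
then its modular commutator vanishes: `J(A,B,C)_ρ = 0`. -/
theorem modular_commutator_real_entries
    (ρ : Matrix (A × B × C) (A × B × C) ℂ) (hρ : ρ.PosDef) (hTr : ρ.trace = 1)
    (hreal : ∃ (UA : Matrix A A ℂ) (UB : Matrix B B ℂ) (UC : Matrix C C ℂ),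
      UA ∈ Matrix.unitaryGroup A ℂ ∧ UB ∈ Matrix.unitaryGroup B ℂ ∧
      UC ∈ Matrix.unitaryGroup C ℂ ∧
      ∀ x y, ((tens3 UA UB UC * ρ * star (tens3 UA UB UC)) x y).im = 0) :
    Jmod ρ = 0 :=
  modular_commutator_real_entries_general ρ hρ hreal

end ModularCommutator
end
end

section
/- If a positive definite density matrix ρ on H_A ⊗ H_B ⊗ H_C satisfies the quantum Markov chain operator identity K_AB(ρ) + K_BC(ρ) − K_B(ρ) − K_ABC(ρ) = 0 (with implicit identity extensions), then its modular commutator vanishes: J(A,B,C)_ρ = 0. -/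
/-!
The Markov identity reads `K_AB = K_B + K_ABC − K_BC`, so `[K_AB, K_BC] = [K_B, K_BC] + [K_ABC, K_BC]`.
The second commutator has zero `ρ`-expectation because `K_ABC = −ln ρ` commutes with `ρ`. The
first involves only operators on `BC`, so its `ρ`-expectation is a `ρ_BC`-expectation, which
vanishes because `ρ_BC` commutes with `K_BC = −ln ρ_BC`.
-/

open scoped ComplexOrder

noncomputable section

namespace ModularCommutator

open Matrix Complex

variable {A B C : Type} [Fintype A] [DecidableEq A] [Fintype B] [DecidableEq B]
  [Fintype C] [DecidableEq C]

open scoped Kronecker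

lemma commute_mlog {n : Type} [Fintype n] [DecidableEq n] (M : Matrix n n ℂ) :
    Commute M (mlog M) := by
  by_cases h : M.IsHermitian
  · have hlog : mlog M = Unitary.conjStarAlgAut ℂ _ h.eigenvectorUnitary
        (diagonal fun i => (Real.log (h.eigenvalues i) : ℂ)) := by
      rw [mlog, dif_pos h]; rfl
    rw [hlog]
    nth_rw 1 [h.spectral_theorem]
    exact (commute_diagonal _ _).map _
  · simp only [mlog, dif_neg h]
    exact Commute.zero_right M

lemma trace_mul_commutator_eq_zero_of_commute_right {n R : Type*} [Fintype n] [CommRing R]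
    {σ N : Matrix n n R} (h : Commute σ N) (P : Matrix n n R) :
    (σ * (P * N - N * P)).trace = 0 := by
  rw [Matrix.mul_sub, trace_sub, sub_eq_zero, ← Matrix.mul_assoc,
    trace_mul_cycle, ← h.eq, Matrix.mul_assoc]

lemma trace_mul_commutator_eq_zero_of_commute_left {n R : Type*} [Fintype n] [CommRing R]
    {σ P : Matrix n n R} (h : Commute σ P) (N : Matrix n n R) :
    (σ * (P * N - N * P)).trace = 0 := by
  rw [Matrix.mul_sub, trace_sub, sub_eq_zero, ← Matrix.mul_assoc, h.eq,
    Matrix.mul_assoc, trace_mul_comm, Matrix.mul_assoc]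

omit [Fintype A] [Fintype B] [DecidableEq B] [Fintype C] [DecidableEq C] in
lemma embBC_eq_one_kronecker (M : Matrix (B × C) (B × C) ℂ) :
    (embBC M : Matrix (A × B × C) (A × B × C) ℂ) = (1 : Matrix A A ℂ) ⊗ₖ M := by
  ext ⟨a, p⟩ ⟨a', q⟩
  simp [embBC, one_apply]

omit [Fintype A] [Fintype B] [DecidableEq B] [Fintype C] in
lemma embB_eq_embBC_kronecker_one (M : Matrix B B ℂ) :
    (embB M : Matrix (A × B × C) (A × B × C) ℂ) = embBC (M ⊗ₖ (1 : Matrix C C ℂ)) := by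
  ext ⟨a, b, c⟩ ⟨a', b', c'⟩
  simp only [embB, embBC, kronecker_apply, one_apply]
  by_cases ha : a = a' <;> by_cases hc : c = c' <;> simp [ha, hc]

omit [DecidableEq B] [DecidableEq C] in
lemma embBC_mul (P Q : Matrix (B × C) (B × C) ℂ) :
    (embBC P : Matrix (A × B × C) (A × B × C) ℂ) * embBC Q = embBC (P * Q) := by
  simp only [embBC_eq_one_kronecker, ← mul_kronecker_mul, Matrix.one_mul]

omit [DecidableEq B] [DecidableEq C] in
lemma trace_mul_embBC (ρ : Matrix (A × B × C) (A × B × C) ℂ) (P : Matrix (B × C) (B × C) ℂ) :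
    (ρ * embBC P).trace = (ptBC ρ * P).trace := by
  simp only [Matrix.trace, Matrix.diag, Matrix.mul_apply, embBC, ptBC,
    Fintype.sum_prod_type, Finset.sum_mul]
  rw [Finset.sum_comm]
  congr 1; ext p
  rw [Finset.sum_comm]
  congr 1; ext q
  simp [Finset.sum_comm (γ := A)]

lemma trace_mul_commutator_embB_KBC (ρ : Matrix (A × B × C) (A × B × C) ℂ)
    (M : Matrix B B ℂ) :
    (ρ * (embB M * KBC ρ - KBC ρ * embB M)).trace = 0 := by
  rw [embB_eq_embBC_kronecker_one, KBC, embBC_mul, embBC_mul, Matrix.mul_sub, trace_sub,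
    trace_mul_embBC, trace_mul_embBC, ← trace_sub, ← Matrix.mul_sub]
  exact trace_mul_commutator_eq_zero_of_commute_right (commute_mlog (ptBC ρ)).neg_right _

theorem modular_commutator_markov_general
    (ρ : Matrix (A × B × C) (A × B × C) ℂ)
    (hMarkov : KAB ρ + KBC ρ - embB (-(mlog (ptB ρ))) - (-(mlog ρ)) = 0) :
    Jmod ρ = 0 := by
  set KB : Matrix (A × B × C) (A × B × C) ℂ := embB (-(mlog (ptB ρ)))
  set KABC := -(mlog ρ)
  have hKAB : KAB ρ = KB + KABC - KBC ρ := by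
    rw [← sub_eq_zero, ← hMarkov]
    abel
  have hABC : (ρ * (KABC * KBC ρ - KBC ρ * KABC)).trace = 0 :=
    trace_mul_commutator_eq_zero_of_commute_left (commute_mlog ρ).neg_right _
  have hexpand : ρ * (KAB ρ * KBC ρ - KBC ρ * KAB ρ)
      = ρ * (KB * KBC ρ - KBC ρ * KB) + ρ * (KABC * KBC ρ - KBC ρ * KABC) := by
    rw [hKAB]
    noncomm_ring
  rw [Jmod, hexpand, trace_add, trace_mul_commutator_embB_KBC, hABC, add_zero, mul_zero]

/-- If a positive definite density matrix `ρ` on `H_A ⊗ H_B ⊗ H_C`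
satisfies the quantum Markov chain operator identity
`K_AB(ρ) + K_BC(ρ) − K_B(ρ) − K_ABC(ρ) = 0` (with implicit identity extensions),
then its modular commutator vanishes: `J(A,B,C)_ρ = 0`. -/
theorem modular_commutator_markov
    (ρ : Matrix (A × B × C) (A × B × C) ℂ) (hρ : ρ.PosDef) (hTr : ρ.trace = 1)
    (hMarkov : KAB ρ + KBC ρ - embB (-(mlog (ptB ρ))) - (-(mlog ρ)) = 0) :
    Jmod ρ = 0 :=
  modular_commutator_markov_general ρ hMarkov

end ModularCommutator
end
end
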